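/- Strong finitary model property of JD_CS: for every axiomatically appropriate constant specification CS for JD there exist computable functions f, g, h : ℕ → ℕ such that for every formula A not derivable in the Hilbert system JD_CS there is a finitary Fitting model M = (W,R,E,ν) for JD_CS, with E the minimal admissible evidence relation containing a finite base B, and a world w ∈ W with M,w ⊮ A, |W| ≤ f(|A|), |B| ≤ g(|A|), and |{(w,p) : w ∈ ν(p)}| ≤ h(|A|), where |A| denotes the number of symbols of A and |·| denotes cardinality. -/

import Mathlib

namespace JustificationLogic

/-- Justification terms: constants, variables, application, sum, and proof checker `!`. -/
inductive Term : Type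
  | const : ℕ → Term
  | var : ℕ → Term
  | app : Term → Term → Term
  | sum : Term → Term → Term
  | bang : Term → Term
  deriving DecidableEq

/-- Formulas of justification logic: atoms, negation, implication, and `t : A`. -/
inductive Formula : Type
  | atom : ℕ → Formula
  | neg : Formula → Formula
  | impl : Formula → Formula → Formula
  | just : Term → Formula → Formula
  deriving DecidableEq

/-- Disjunction, defined classically: `A ∨ B := ¬A → B`. -/
def Formula.or (A B : Formula) : Formula := (Formula.neg A).impl B

/-- Falsum, defined as the negation of a propositional tautology. -/
def Formula.falsum : Formula := Formula.neg ((Formula.atom 0).impl (Formula.atom 0))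

/-- Number of symbols of a term. -/
def Term.size : Term → ℕ
  | .const _ => 1
  | .var _ => 1
  | .app s t => s.size + t.size + 1
  | .sum s t => s.size + t.size + 1
  | .bang t => t.size + 1

/-- Number of symbols of a formula. -/
def Formula.size : Formula → ℕ
  | .atom _ => 1
  | .neg A => A.size + 1
  | .impl A B => A.size + B.size + 1
  | .just t A => t.size + A.size + 1

/-- An explicit numerical code for terms (an injective Gödel numbering). -/
def Term.code : Term → ℕ
  | .const n => Nat.pair 0 n
  | .var n => Nat.pair 1 n
  | .app s t => Nat.pair 2 (Nat.pair s.code t.code)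
  | .sum s t => Nat.pair 3 (Nat.pair s.code t.code)
  | .bang t => Nat.pair 4 t.code

/-- An explicit numerical code for formulas (an injective Gödel numbering). -/
def Formula.code : Formula → ℕ
  | .atom n => Nat.pair 0 n
  | .neg A => Nat.pair 1 A.code
  | .impl A B => Nat.pair 2 (Nat.pair A.code B.code)
  | .just t A => Nat.pair 3 (Nat.pair t.code A.code)

/-- Substitution of terms for term variables. -/
def Term.subst (σ : ℕ → Term) : Term → Term
  | .const n => .const n
  | .var n => σ n
  | .app s t => .app (s.subst σ) (t.subst σ)
  | .sum s t => .sum (s.subst σ) (t.subst σ)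
  | .bang t => .bang (t.subst σ)

/-- Simultaneous substitution of terms for term variables and formulas for atoms. -/
def Formula.subst (σ : ℕ → Term) (τ : ℕ → Formula) : Formula → Formula
  | .atom n => τ n
  | .neg A => .neg (A.subst σ τ)
  | .impl A B => .impl (A.subst σ τ) (B.subst σ τ)
  | .just t A => .just (t.subst σ) (A.subst σ τ)

/-- `towerT c n = !ⁿc`. -/
def towerT (c : Term) : ℕ → Term
  | 0 => c
  | n + 1 => Term.bang (towerT c n)

/-- `towerF c A n = !ⁿ⁻¹c : ⋯ : !c : c : A` (and `A` for `n = 0`), so that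
`(towerT c n) : (towerF c A n)` is the `n`-th formula produced by the rule (AN!). -/
def towerF (c : Term) (A : Formula) : ℕ → Formula
  | 0 => A
  | n + 1 => Formula.just (towerT c n) (towerF c A n)

/-- The axioms of the justification logics considered, with switches `hd`, `ht`, `h4`
for the axioms (jd), (jt), (j4).  The propositional part (A1) is given by three
standard Hilbert-style schemes axiomatizing classical propositional logic. -/
inductive Ax (hd ht h4 : Bool) : Formula → Prop
  | k (A B : Formula) : Ax hd ht h4 (A.impl (B.impl A))
  | s (A B C : Formula) :
      Ax hd ht h4 ((A.impl (B.impl C)).impl ((A.impl B).impl (A.impl C)))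
  | dn (A B : Formula) :
      Ax hd ht h4 (((A.neg).impl (B.neg)).impl (B.impl A))
  | a2 (t s : Term) (A B : Formula) :
      Ax hd ht h4 ((Formula.just t (A.impl B)).impl
        ((Formula.just s A).impl (Formula.just (Term.app t s) B)))
  | a3 (t s : Term) (A : Formula) :
      Ax hd ht h4 (((Formula.just t A).or (Formula.just s A)).impl
        (Formula.just (Term.sum t s) A))
  | jd (t : Term) : hd = true →
      Ax hd ht h4 ((Formula.just t Formula.falsum).impl Formula.falsum)
  | jt (t : Term) (A : Formula) : ht = true →
      Ax hd ht h4 ((Formula.just t A).impl A)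
  | j4 (t : Term) (A : Formula) : h4 = true →
      Ax hd ht h4 ((Formula.just t A).impl
        (Formula.just (Term.bang t) (Formula.just t A)))

/-- Axioms of the respective logics. -/
def AxJ : Formula → Prop := Ax false false false
def AxJT : Formula → Prop := Ax false true false
def AxJD : Formula → Prop := Ax true false false
def AxJ4 : Formula → Prop := Ax false false true
def AxJD4 : Formula → Prop := Ax true false true
def AxLP : Formula → Prop := Ax false true true

/-- `CS` is a constant specification for the logic with axioms `Axm`:
every member of `CS` is of the form `c : A` with `c` a constant and `A` an axiom. -/
def ConstSpec (Axm : Formula → Prop) (CS : Set Formula) : Prop :=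
  ∀ F ∈ CS, ∃ (c : ℕ) (A : Formula), F = Formula.just (Term.const c) A ∧ Axm A

/-- `CS` is axiomatically appropriate for axioms `Axm`:
for every axiom `A` there is a constant `c` with `c : A ∈ CS`. -/
def AxApprop (Axm : Formula → Prop) (CS : Set Formula) : Prop :=
  ∀ A : Formula, Axm A → ∃ c : ℕ, Formula.just (Term.const c) A ∈ CS

/-- `CS` is schematic: the set of axioms justified by a given constant consists of
axiom schemes, i.e. it is closed under simultaneous substitution of terms for term
variables and formulas for atomic propositions. -/
def Schematic (CS : Set Formula) : Prop :=
  ∀ (c : ℕ) (A : Formula), Formula.just (Term.const c) A ∈ CS →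
    ∀ (σ : ℕ → Term) (τ : ℕ → Formula),
      Formula.just (Term.const c) (A.subst σ τ) ∈ CS

/-- `CS` is decidable: some computable function decides membership in `CS`
(via the explicit Gödel numbering of formulas). -/
def DecidableCS (CS : Set Formula) : Prop :=
  ∃ C : ℕ → Bool, Computable C ∧ ∀ F : Formula, F ∈ CS ↔ C F.code = true

/-- Hilbert-style derivability with the iterated axiom necessitation rule (AN!):
from `c : A ∈ CS` infer `!ⁿc : !ⁿ⁻¹c : ⋯ : !c : c : A` for every `n ≥ 0`. -/
inductive DerivB (Axm : Formula → Prop) (CS : Set Formula) : Formula → Prop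
  | ax {A : Formula} : Axm A → DerivB Axm CS A
  | mp {A B : Formula} : DerivB Axm CS (A.impl B) → DerivB Axm CS A → DerivB Axm CS B
  | an (c : ℕ) (A : Formula) (n : ℕ) :
      Formula.just (Term.const c) A ∈ CS →
      DerivB Axm CS (Formula.just (towerT (Term.const c) n) (towerF (Term.const c) A n))

/-- Hilbert-style derivability with the simple axiom necessitation rule (AN):
from `c : A ∈ CS` infer `c : A`. -/
inductive DerivS (Axm : Formula → Prop) (CS : Set Formula) : Formula → Prop
  | ax {A : Formula} : Axm A → DerivS Axm CS A
  | mp {A B : Formula} : DerivS Axm CS (A.impl B) → DerivS Axm CS A → DerivS Axm CS B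
  | an (c : ℕ) (A : Formula) :
      Formula.just (Term.const c) A ∈ CS →
      DerivS Axm CS (Formula.just (Term.const c) A)

/-- A structure for Fitting models: a nonempty set of worlds, an accessibility
relation, an evidence relation and a valuation. -/
structure Model : Type 1 where
  World : Type
  nonempty : Nonempty World
  R : World → World → Prop
  E : Term → Formula → World → Prop
  val : ℕ → World → Prop

/-- The satisfaction relation `M, w ⊩ A`. -/
def Sat (M : Model) : Formula → M.World → Prop
  | .atom n, w => M.val n w
  | .neg A, w => ¬ Sat M A w
  | .impl A B, w => Sat M A w → Sat M B w
  | .just t A, w => M.E t A w ∧ ∀ v : M.World, M.R w v → Sat M A v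

/-- The evidence relation of a model, as a set of triples. -/
def EvSet (M : Model) : Set (Term × Formula × M.World) :=
  {x | M.E x.1 x.2.1 x.2.2}

/-- The graph of the valuation: the set `{(w, p) | w ∈ ν(p)}`. -/
def ValSet (M : Model) : Set (M.World × ℕ) :=
  {p | M.val p.2 p.1}

/-- Seriality of a relation: every world has a successor. -/
def Serial {W : Type} (R : W → W → Prop) : Prop := ∀ w : W, ∃ v : W, R w v

/-- Admissible evidence relation for the logics without the (j4) axiom:
closure under sum and application, and the constant specification condition
with iterated `!`. -/
def AdmissibleBang (CS : Set Formula) {W : Type}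
    (E : Set (Term × Formula × W)) : Prop :=
  (∀ (s t : Term) (A : Formula) (w : W),
      ((s, A, w) ∈ E ∨ (t, A, w) ∈ E) → (Term.sum s t, A, w) ∈ E) ∧
  (∀ (s t : Term) (A B : Formula) (w : W),
      (s, A.impl B, w) ∈ E → (t, A, w) ∈ E → (Term.app s t, B, w) ∈ E) ∧
  (∀ (c : ℕ) (A : Formula) (w : W) (n : ℕ),
      Formula.just (Term.const c) A ∈ CS →
      (towerT (Term.const c) n, towerF (Term.const c) A n, w) ∈ E)

/-- Admissible evidence relation for the logics with the (j4) axiom: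
closure under sum and application, the simple constant specification condition,
closure under `!`, and monotonicity along the accessibility relation. -/
def AdmissibleJ4 (CS : Set Formula) {W : Type} (R : W → W → Prop)
    (E : Set (Term × Formula × W)) : Prop :=
  (∀ (s t : Term) (A : Formula) (w : W),
      ((s, A, w) ∈ E ∨ (t, A, w) ∈ E) → (Term.sum s t, A, w) ∈ E) ∧
  (∀ (s t : Term) (A B : Formula) (w : W),
      (s, A.impl B, w) ∈ E → (t, A, w) ∈ E → (Term.app s t, B, w) ∈ E) ∧
  (∀ (c : ℕ) (A : Formula) (w : W),
      Formula.just (Term.const c) A ∈ CS → (Term.const c, A, w) ∈ E) ∧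
  (∀ (t : Term) (A : Formula) (w : W),
      (t, A, w) ∈ E → (Term.bang t, Formula.just t A, w) ∈ E) ∧
  (∀ (t : Term) (A : Formula) (w v : W),
      (t, A, w) ∈ E → R w v → (t, A, v) ∈ E)

/-- `M` is a Fitting model for `J_CS`. -/
def IsModelJ (CS : Set Formula) (M : Model) : Prop :=
  AdmissibleBang CS (EvSet M)

/-- `M` is a Fitting model for `JT_CS`: additionally `R` is reflexive. -/
def IsModelJT (CS : Set Formula) (M : Model) : Prop :=
  Reflexive M.R ∧ AdmissibleBang CS (EvSet M)

/-- `M` is a Fitting model for `JD_CS`: additionally `R` is serial. -/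
def IsModelJD (CS : Set Formula) (M : Model) : Prop :=
  Serial M.R ∧ AdmissibleBang CS (EvSet M)

/-- `M` is a Fitting model for `J4_CS`: `R` is transitive. -/
def IsModelJ4 (CS : Set Formula) (M : Model) : Prop :=
  Transitive M.R ∧ AdmissibleJ4 CS M.R (EvSet M)

/-- `M` is a Fitting model for `JD4_CS`: `R` is serial and transitive. -/
def IsModelJD4 (CS : Set Formula) (M : Model) : Prop :=
  Serial M.R ∧ Transitive M.R ∧ AdmissibleJ4 CS M.R (EvSet M)

/-- `M` is a Fitting model for `LP_CS`: `R` is reflexive and transitive. -/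
def IsModelLP (CS : Set Formula) (M : Model) : Prop :=
  Reflexive M.R ∧ Transitive M.R ∧ AdmissibleJ4 CS M.R (EvSet M)

/-- `B` is a base for the evidence relation of `M`, and that evidence relation is
minimal (least) among the admissible ones (non-(j4) version) containing `B`. -/
def MinBaseBang (CS : Set Formula) (M : Model)
    (B : Set (Term × Formula × M.World)) : Prop :=
  B ⊆ EvSet M ∧
  ∀ E' : Set (Term × Formula × M.World),
    AdmissibleBang CS E' → B ⊆ E' → EvSet M ⊆ E'

/-- `B` is a base for the evidence relation of `M`, and that evidence relation is
minimal (least) among the admissible ones ((j4) version) containing `B`. -/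
def MinBaseJ4 (CS : Set Formula) (M : Model)
    (B : Set (Term × Formula × M.World)) : Prop :=
  B ⊆ EvSet M ∧
  ∀ E' : Set (Term × Formula × M.World),
    AdmissibleJ4 CS M.R E' → B ⊆ E' → EvSet M ⊆ E'

/-- `M` is finitary (non-(j4) version): finitely many worlds, the evidence relation
is the minimal admissible one over some finite base, and the valuation has finite graph. -/
def FinitaryBang (CS : Set Formula) (M : Model) : Prop :=
  Finite M.World ∧
  (∃ B : Set (Term × Formula × M.World), B.Finite ∧ MinBaseBang CS M B) ∧
  (ValSet M).Finite

/-- `M` is finitary ((j4) version): finitely many worlds, the evidence relation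
is the minimal admissible one over some finite base, and the valuation has finite graph. -/
def FinitaryJ4 (CS : Set Formula) (M : Model) : Prop :=
  Finite M.World ∧
  (∃ B : Set (Term × Formula × M.World), B.Finite ∧ MinBaseJ4 CS M B) ∧
  (ValSet M).Finite

/-!
A formula `A` that `JD_CS` does not derive fails in the canonical model, whose worlds are the
maximal consistent sets. Seriality of the canonical model is where (jd) enters: by axiomatic
appropriateness, whatever follows from the justified formulas `{B | t : B ∈ Γ}` is again
justified in `Γ`, so this set cannot derive `⊥`, since `s : ⊥ ∈ Γ` would contradict (jd).

The canonical model is then filtrated through the subformulas of `A`: worlds agreeing on them are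
identified (at most `2^|A|` classes), and the evidence relation is the least admissible one over
the base of triples `(t, B, [w])` with `t : B` a subformula of `A` that has evidence at the chosen
representative of `[w]` (at most `|A| · 2^|A|` triples). The truth lemma for `t : B` holds
because that least relation lies inside the pullback of the original evidence relation along the
choice of representatives, which is itself admissible.
-/

namespace Formula

def subformulas : Formula → Finset Formula
  | atom n => {atom n}
  | neg A => insert (neg A) A.subformulas
  | impl A B => insert (impl A B) (A.subformulas ∪ B.subformulas)
  | just t A => insert (just t A) A.subformulas

@[simp]
theorem mem_subformulas_self (A : Formula) : A ∈ A.subformulas := by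
  cases A <;> simp [subformulas]

theorem subformulas_subset_of_mem {A B : Formula} (h : B ∈ A.subformulas) :
    B.subformulas ⊆ A.subformulas := by
  induction A with
  | atom n => simp_all [subformulas]
  | neg A ih | just _ A ih =>
    rcases Finset.mem_insert.1 h with rfl | h
    · rfl
    · exact (ih h).trans (Finset.subset_insert _ _)
  | impl A₁ A₂ ih₁ ih₂ =>
    rcases Finset.mem_insert.1 h with rfl | h
    · rfl
    rcases Finset.mem_union.1 h with h | h
    · exact (ih₁ h).trans (Finset.subset_union_left.trans (Finset.subset_insert _ _))
    · exact (ih₂ h).trans (Finset.subset_union_right.trans (Finset.subset_insert _ _))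

theorem card_subformulas_le_size (A : Formula) : A.subformulas.card ≤ A.size := by
  induction A with
  | atom n => simp [subformulas, size]
  | neg A ih => grw [subformulas, Finset.card_insert_le, ih, size]
  | impl A₁ A₂ ih₁ ih₂ =>
    grw [subformulas, Finset.card_insert_le, Finset.card_union_le, ih₁, ih₂, size]
  | just t A ih => grw [subformulas, Finset.card_insert_le, ih, size]; omega

end Formula

def IsSubformulaClosed (Φ : Finset Formula) : Prop :=
  ∀ B ∈ Φ, B.subformulas ⊆ Φ

theorem isSubformulaClosed_subformulas (A : Formula) : IsSubformulaClosed A.subformulas :=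
  fun _ => Formula.subformulas_subset_of_mem

inductive DerivFrom (CS Γ : Set Formula) : Formula → Prop
  | ax {A : Formula} : AxJD A → DerivFrom CS Γ A
  | hyp {A : Formula} : A ∈ Γ → DerivFrom CS Γ A
  | mp {A B : Formula} : DerivFrom CS Γ (A.impl B) → DerivFrom CS Γ A → DerivFrom CS Γ B
  | an (c : ℕ) (A : Formula) (n : ℕ) : Formula.just (Term.const c) A ∈ CS →
      DerivFrom CS Γ (Formula.just (towerT (Term.const c) n) (towerF (Term.const c) A n))

namespace DerivFrom

variable {CS Γ Δ : Set Formula} {A B : Formula}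

theorem mono (h : DerivFrom CS Γ A) (hΓ : Γ ⊆ Δ) : DerivFrom CS Δ A := by
  induction h with
  | ax h => exact ax h
  | hyp h => exact hyp (hΓ h)
  | mp _ _ ih₁ ih₂ => exact mp ih₁ ih₂
  | an c A n h => exact an c A n h

theorem derivB_of_empty (h : DerivFrom CS ∅ A) : DerivB AxJD CS A := by
  induction h with
  | ax h => exact .ax h
  | hyp h => exact (Set.notMem_empty _ h).elim
  | mp _ _ ih₁ ih₂ => exact .mp ih₁ ih₂
  | an c A n h => exact .an c A n h

theorem exists_finite_subset (h : DerivFrom CS Γ A) :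
    ∃ Γ₀ ⊆ Γ, Γ₀.Finite ∧ DerivFrom CS Γ₀ A := by
  induction h with
  | ax h => exact ⟨∅, Set.empty_subset _, Set.finite_empty, ax h⟩
  | @hyp B h => exact ⟨{B}, Set.singleton_subset_iff.2 h, Set.finite_singleton _, hyp rfl⟩
  | mp _ _ ih₁ ih₂ =>
    obtain ⟨Γ₁, hΓ₁, hfin₁, h₁⟩ := ih₁
    obtain ⟨Γ₂, hΓ₂, hfin₂, h₂⟩ := ih₂
    exact ⟨Γ₁ ∪ Γ₂, Set.union_subset hΓ₁ hΓ₂, hfin₁.union hfin₂,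
      mp (h₁.mono Set.subset_union_left) (h₂.mono Set.subset_union_right)⟩
  | an c A n h => exact ⟨∅, Set.empty_subset _, Set.finite_empty, an c A n h⟩

theorem hyp_insert : DerivFrom CS (insert A Γ) A := hyp (Set.mem_insert _ _)

theorem weaken_insert (h : DerivFrom CS Γ A) : DerivFrom CS (insert B Γ) A :=
  h.mono (Set.subset_insert _ _)

theorem imp_self : DerivFrom CS Γ (A.impl A) :=
  mp (mp (ax (Ax.s A (A.impl A) A)) (ax (Ax.k A (A.impl A)))) (ax (Ax.k A A))

theorem deduction (h : DerivFrom CS (insert A Γ) B) : DerivFrom CS Γ (A.impl B) := by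
  induction h with
  | ax h => exact mp (ax (Ax.k _ _)) (ax h)
  | hyp h =>
    rcases h with rfl | h
    · exact imp_self
    · exact mp (ax (Ax.k _ _)) (hyp h)
  | mp _ _ ih₁ ih₂ => exact mp (mp (ax (Ax.s _ _ _)) ih₁) ih₂
  | an c A n h => exact mp (ax (Ax.k _ _)) (an c A n h)

theorem absurd (hn : DerivFrom CS Γ A.neg) (h : DerivFrom CS Γ A) : DerivFrom CS Γ B :=
  mp (mp (ax (Ax.dn B A)) (mp (ax (Ax.k _ _)) hn)) h

theorem not_not_imp : DerivFrom CS Γ (A.neg.neg.impl A) := by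
  refine deduction (mp (mp (ax (Ax.dn _ _)) (deduction (B := Formula.falsum) ?_)) imp_self)
  exact absurd (weaken_insert hyp_insert) hyp_insert

/-- As `⊥ = ¬⊤` with `⊤ = (p₀ → p₀)`, axiom (dn) turns `¬¬A → ⊥` into `⊤ → ¬A`. -/
theorem neg_intro (h : DerivFrom CS (insert A Γ) Formula.falsum) : DerivFrom CS Γ A.neg := by
  have h' : DerivFrom CS Γ (A.neg.neg.impl Formula.falsum) :=
    deduction (mp (weaken_insert (deduction h)) (mp not_not_imp hyp_insert))
  exact mp (mp (ax (Ax.dn _ _)) h') imp_self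

theorem by_contra (h : DerivFrom CS (insert A.neg Γ) Formula.falsum) : DerivFrom CS Γ A :=
  mp not_not_imp (neg_intro h)

theorem or_inl (h : DerivFrom CS Γ A) : DerivFrom CS Γ (A.or B) :=
  deduction (absurd hyp_insert (weaken_insert h))

theorem or_inr (h : DerivFrom CS Γ B) : DerivFrom CS Γ (A.or B) :=
  mp (ax (Ax.k _ _)) h

end DerivFrom

def Consistent (CS Γ : Set Formula) : Prop :=
  ¬ DerivFrom CS Γ Formula.falsum

def MaxConsistent (CS Γ : Set Formula) : Prop :=
  Consistent CS Γ ∧ ∀ A : Formula, A ∉ Γ → ¬ Consistent CS (insert A Γ)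

namespace MaxConsistent

variable {CS Γ : Set Formula} {A B : Formula}

theorem mem_of_derivFrom (hΓ : MaxConsistent CS Γ) (h : DerivFrom CS Γ A) : A ∈ Γ := by
  by_contra hA
  exact hΓ.1 (.mp (DerivFrom.deduction (not_not.1 (hΓ.2 A hA))) h)

theorem neg_mem_iff (hΓ : MaxConsistent CS Γ) : A.neg ∈ Γ ↔ A ∉ Γ :=
  ⟨fun hn h => hΓ.1 (DerivFrom.absurd (.hyp hn) (.hyp h)),
    fun hA => hΓ.mem_of_derivFrom (DerivFrom.neg_intro (not_not.1 (hΓ.2 A hA)))⟩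

theorem impl_mem_iff (hΓ : MaxConsistent CS Γ) : A.impl B ∈ Γ ↔ (A ∈ Γ → B ∈ Γ) := by
  refine ⟨fun h hA => hΓ.mem_of_derivFrom (.mp (.hyp h) (.hyp hA)), fun h => ?_⟩
  by_cases hA : A ∈ Γ
  · exact hΓ.mem_of_derivFrom (.mp (.ax (Ax.k _ _)) (.hyp (h hA)))
  · exact hΓ.mem_of_derivFrom <| DerivFrom.deduction <|
      DerivFrom.absurd (.hyp (Set.mem_insert_of_mem _ (hΓ.neg_mem_iff.2 hA))) DerivFrom.hyp_insert

theorem exists_just_mem_of_derivFrom (hApp : AxApprop AxJD CS) (hΓ : MaxConsistent CS Γ)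
    (h : DerivFrom CS {B | ∃ t, Formula.just t B ∈ Γ} A) : ∃ t, Formula.just t A ∈ Γ := by
  induction h with
  | @ax A h =>
    obtain ⟨c, hc⟩ := hApp A h
    exact ⟨_, hΓ.mem_of_derivFrom (.an c A 0 hc)⟩
  | hyp h => exact h
  | @mp A B _ _ ih₁ ih₂ =>
    obtain ⟨s, hs⟩ := ih₁
    obtain ⟨u, hu⟩ := ih₂
    exact ⟨Term.app s u,
      hΓ.mem_of_derivFrom (.mp (.mp (.ax (Ax.a2 s u A B)) (.hyp hs)) (.hyp hu))⟩
  | an c A n h => exact ⟨_, hΓ.mem_of_derivFrom (.an c A (n + 1) h)⟩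

end MaxConsistent

theorem consistent_sUnion_of_isChain {CS : Set Formula} {c : Set (Set Formula)}
    (hc : IsChain (· ⊆ ·) c) (hne : c.Nonempty) (hcon : ∀ Δ ∈ c, Consistent CS Δ) :
    Consistent CS (⋃₀ c) := by
  intro h
  obtain ⟨Γ₀, hΓ₀, hfin, h₀⟩ := h.exists_finite_subset
  obtain ⟨Δ, hΔ, hΓ₀Δ⟩ :=
    hc.directedOn.exists_mem_subset_of_finite_of_subset_sUnion hne hfin hΓ₀
  exact hcon Δ hΔ (h₀.mono hΓ₀Δ)

theorem exists_maxConsistent_superset {CS Γ : Set Formula} (h : Consistent CS Γ) :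
    ∃ Δ, Γ ⊆ Δ ∧ MaxConsistent CS Δ := by
  obtain ⟨Δ, hΓΔ, hΔ, hmax⟩ := zorn_subset_nonempty {Δ | Consistent CS Δ}
    (fun c hc hchain hne => ⟨⋃₀ c, consistent_sUnion_of_isChain hchain hne hc,
      fun _ => Set.subset_sUnion_of_mem⟩) Γ h
  exact ⟨Δ, hΓΔ, hΔ, fun A hA hcon =>
    hA (hmax hcon (Set.subset_insert A Δ) (Set.mem_insert A Δ))⟩

theorem exists_maxConsistent_not_mem {CS : Set Formula} {A : Formula}
    (hA : ¬ DerivB AxJD CS A) : ∃ Γ, MaxConsistent CS Γ ∧ A ∉ Γ := by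
  have hcon : Consistent CS {A.neg} := fun h =>
    hA (DerivFrom.derivB_of_empty (DerivFrom.by_contra (h.mono (by simp))))
  obtain ⟨Γ, hAΓ, hΓ⟩ := exists_maxConsistent_superset hcon
  exact ⟨Γ, hΓ, hΓ.neg_mem_iff.1 (hAΓ rfl)⟩

def canonicalModel (CS : Set Formula) (h : Nonempty {Γ // MaxConsistent CS Γ}) : Model where
  World := {Γ // MaxConsistent CS Γ}
  nonempty := h
  R Γ Δ := ∀ (t : Term) (A : Formula), Formula.just t A ∈ Γ.1 → A ∈ Δ.1
  E t A Γ := Formula.just t A ∈ Γ.1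
  val n Γ := Formula.atom n ∈ Γ.1

section Canonical

variable {CS : Set Formula} (h : Nonempty {Γ // MaxConsistent CS Γ})

theorem serial_canonicalModel (hApp : AxApprop AxJD CS) : Serial (canonicalModel CS h).R := by
  rintro ⟨Γ, hΓ⟩
  have hcon : Consistent CS {B | ∃ t, Formula.just t B ∈ Γ} := fun hd => by
    obtain ⟨s, hs⟩ := hΓ.exists_just_mem_of_derivFrom hApp hd
    exact hΓ.1 (.mp (.ax (Ax.jd s rfl)) (.hyp hs))
  obtain ⟨Δ, hsub, hΔ⟩ := exists_maxConsistent_superset hcon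
  exact ⟨⟨Δ, hΔ⟩, fun t A hA => hsub ⟨t, hA⟩⟩

theorem admissibleBang_canonicalModel : AdmissibleBang CS (EvSet (canonicalModel CS h)) := by
  refine ⟨?_, ?_, ?_⟩
  · rintro s t A ⟨Γ, hΓ⟩ (hs | ht)
    · exact hΓ.mem_of_derivFrom (.mp (.ax (Ax.a3 s t A)) (DerivFrom.or_inl (.hyp hs)))
    · exact hΓ.mem_of_derivFrom (.mp (.ax (Ax.a3 s t A)) (DerivFrom.or_inr (.hyp ht)))
  · rintro s t A B ⟨Γ, hΓ⟩ hs ht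
    exact hΓ.mem_of_derivFrom (.mp (.mp (.ax (Ax.a2 s t A B)) (.hyp hs)) (.hyp ht))
  · rintro c A ⟨Γ, hΓ⟩ n hc
    exact hΓ.mem_of_derivFrom (.an c A n hc)

theorem isModelJD_canonicalModel (hApp : AxApprop AxJD CS) :
    IsModelJD CS (canonicalModel CS h) :=
  ⟨serial_canonicalModel h hApp, admissibleBang_canonicalModel h⟩

theorem sat_canonicalModel_iff (A : Formula) (Γ : (canonicalModel CS h).World) :
    Sat (canonicalModel CS h) A Γ ↔ A ∈ Γ.1 := by
  induction A generalizing Γ with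
  | atom n => rfl
  | neg A ih => exact (not_congr (ih Γ)).trans Γ.2.neg_mem_iff.symm
  | impl A B ihA ihB => exact (imp_congr (ihA Γ) (ihB Γ)).trans Γ.2.impl_mem_iff.symm
  | just t A ih =>
    exact ⟨And.left, fun hA => ⟨hA, fun Δ hΓΔ => (ih Δ).2 (hΓΔ t A hA)⟩⟩

end Canonical

section MinEvidence

variable {CS : Set Formula} {W : Type}

def minEvidence (CS : Set Formula) (B : Set (Term × Formula × W)) : Set (Term × Formula × W) :=
  ⋂₀ {E | AdmissibleBang CS E ∧ B ⊆ E}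

theorem AdmissibleBang.sInter {S : Set (Set (Term × Formula × W))}
    (hS : ∀ E ∈ S, AdmissibleBang CS E) : AdmissibleBang CS (⋂₀ S) :=
  ⟨fun s t A w h E hE => (hS E hE).1 s t A w (h.imp (· E hE) (· E hE)),
    fun s t A B w hs ht E hE => (hS E hE).2.1 s t A B w (hs E hE) (ht E hE),
    fun c A w n hc E hE => (hS E hE).2.2 c A w n hc⟩

theorem AdmissibleBang.comap {V : Type} {E : Set (Term × Formula × W)}
    (hE : AdmissibleBang CS E) (f : V → W) :
    AdmissibleBang CS {x : Term × Formula × V | (x.1, x.2.1, f x.2.2) ∈ E} :=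
  ⟨fun s t A v => hE.1 s t A (f v), fun s t A B v => hE.2.1 s t A B (f v),
    fun c A v => hE.2.2 c A (f v)⟩

theorem admissibleBang_minEvidence (B : Set (Term × Formula × W)) :
    AdmissibleBang CS (minEvidence CS B) :=
  AdmissibleBang.sInter fun _ hE => hE.1

theorem subset_minEvidence (B : Set (Term × Formula × W)) : B ⊆ minEvidence CS B :=
  Set.subset_sInter fun _ hE => hE.2

theorem minEvidence_subset {B E : Set (Term × Formula × W)} (hE : AdmissibleBang CS E)
    (hB : B ⊆ E) : minEvidence CS B ⊆ E :=
  Set.sInter_subset_of_mem ⟨hE, hB⟩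

theorem minBaseBang_of_evSet_eq {M : Model} {B : Set (Term × Formula × M.World)}
    (h : EvSet M = minEvidence CS B) : MinBaseBang CS M B :=
  ⟨h ▸ subset_minEvidence B, fun _ hE hB => h ▸ minEvidence_subset hE hB⟩

end MinEvidence

theorem finite_and_ncard_le_of_injOn {α β W : Type*} [Finite W] {s : Set α} {Φ : Finset β}
    (f : α → β × W) (hf : ∀ x ∈ s, (f x).1 ∈ Φ) (hinj : Set.InjOn f s) :
    s.Finite ∧ s.ncard ≤ Φ.card * Nat.card W := by
  have hmaps : Set.MapsTo f s ((Φ : Set β) ×ˢ Set.univ) := fun x hx => ⟨hf x hx, trivial⟩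
  have hfin : ((Φ : Set β) ×ˢ (Set.univ : Set W)).Finite := Φ.finite_toSet.prod Set.finite_univ
  refine ⟨.of_injOn hmaps hinj hfin, ?_⟩
  simpa [Set.ncard_prod] using Set.ncard_le_ncard_of_injOn f hmaps hinj hfin

section Filtration

variable (CS : Set Formula) (M : Model) (Φ : Finset Formula)

def filtrationSetoid : Setoid M.World where
  r w v := ∀ B ∈ Φ, Sat M B w ↔ Sat M B v
  iseqv := ⟨fun _ _ _ => Iff.rfl, fun h B hB => (h B hB).symm,
    fun h h' B hB => (h B hB).trans (h' B hB)⟩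

def filtrationBase : Set (Term × Formula × Quotient (filtrationSetoid M Φ)) :=
  {x | Formula.just x.1 x.2.1 ∈ Φ ∧ M.E x.1 x.2.1 x.2.2.out}

/-- The finest filtration of `M` through `Φ`; atoms and base evidence of a class are read off
at its representative `Quotient.out`. -/
def filtration : Model where
  World := Quotient (filtrationSetoid M Φ)
  nonempty := M.nonempty.map (Quotient.mk _)
  R c d := ∃ w v, Quotient.mk _ w = c ∧ Quotient.mk _ v = d ∧ M.R w v
  E t B c := (t, B, c) ∈ minEvidence CS (filtrationBase M Φ)
  val n c := Formula.atom n ∈ Φ ∧ M.val n c.out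

theorem exists_injective_filtration_world :
    ∃ f : (filtration CS M Φ).World → Φ.powerset, Function.Injective f := by
  classical
  refine ⟨fun c => ⟨Φ.filter (Sat M · c.out), Finset.mem_powerset.2 (Finset.filter_subset _ _)⟩,
    fun c d h => Quotient.out_equiv_out.1 fun B hB => ?_⟩
  simpa [hB] using congrArg (B ∈ ·.1) h

instance : Finite (filtration CS M Φ).World :=
  let ⟨_, hf⟩ := exists_injective_filtration_world CS M Φ
  Finite.of_injective _ hf

theorem card_world_filtration_le : Nat.card (filtration CS M Φ).World ≤ 2 ^ Φ.card := by
  obtain ⟨f, hf⟩ := exists_injective_filtration_world CS M Φ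
  calc Nat.card (filtration CS M Φ).World ≤ Nat.card Φ.powerset :=
        Nat.card_le_card_of_injective f hf
    _ = 2 ^ Φ.card := by rw [Nat.card_eq_fintype_card, Fintype.card_coe, Finset.card_powerset]

theorem filtrationBase_finite_and_ncard_le :
    (filtrationBase M Φ).Finite ∧
      (filtrationBase M Φ).ncard ≤ Φ.card * Nat.card (filtration CS M Φ).World := by
  refine finite_and_ncard_le_of_injOn (fun x => (Formula.just x.1 x.2.1, x.2.2))
    (fun _ hx => hx.1) ?_
  rintro ⟨t, A, c⟩ - ⟨t', A', c'⟩ - h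
  obtain ⟨⟨rfl, rfl⟩, rfl⟩ := by simpa only [Prod.mk.injEq, Formula.just.injEq] using h
  rfl

theorem valSet_filtration_finite_and_ncard_le :
    (ValSet (filtration CS M Φ)).Finite ∧
      (ValSet (filtration CS M Φ)).ncard ≤ Φ.card * Nat.card (filtration CS M Φ).World := by
  refine finite_and_ncard_le_of_injOn (fun x => (Formula.atom x.2, x.1)) (fun _ hx => hx.1) ?_
  rintro ⟨c, n⟩ - ⟨c', n'⟩ - h
  obtain ⟨rfl, rfl⟩ := by simpa only [Prod.mk.injEq, Formula.atom.injEq] using h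
  rfl

variable {CS M Φ}

theorem filtration_R_mk {w v : M.World} (h : M.R w v) :
    (filtration CS M Φ).R (Quotient.mk _ w) (Quotient.mk _ v) :=
  ⟨w, v, rfl, rfl, h⟩

theorem serial_filtration (hR : Serial M.R) : Serial (filtration CS M Φ).R := fun c =>
  let ⟨v, hv⟩ := hR c.out
  ⟨Quotient.mk _ v, c.out, v, c.out_eq, rfl, hv⟩

theorem minBaseBang_filtration :
    MinBaseBang CS (filtration CS M Φ) (filtrationBase M Φ) :=
  minBaseBang_of_evSet_eq rfl

theorem isModelJD_filtration (hM : IsModelJD CS M) : IsModelJD CS (filtration CS M Φ) :=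
  ⟨serial_filtration hM.1, admissibleBang_minEvidence _⟩

theorem sat_out_mk_iff {A : Formula} (hA : A ∈ Φ) (w : M.World) :
    Sat M A (Quotient.mk (filtrationSetoid M Φ) w).out ↔ Sat M A w :=
  Quotient.mk_out (s := filtrationSetoid M Φ) w A hA

theorem sat_filtration_mk_iff (hΦ : IsSubformulaClosed Φ) (hE : AdmissibleBang CS (EvSet M))
    {A : Formula} (hA : A ∈ Φ) (w : M.World) :
    Sat (filtration CS M Φ) A (Quotient.mk _ w) ↔ Sat M A w := by
  induction A generalizing w with
  | atom n => exact (and_iff_right hA).trans (sat_out_mk_iff hA w)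
  | neg A ih =>
    exact not_congr (ih (hΦ _ hA (by simp [Formula.subformulas])) w)
  | impl A B ihA ihB =>
    exact imp_congr (ihA (hΦ _ hA (by simp [Formula.subformulas])) w)
      (ihB (hΦ _ hA (by simp [Formula.subformulas])) w)
  | just t A ih =>
    have hA' : A ∈ Φ := hΦ _ hA (by simp [Formula.subformulas])
    constructor
    · rintro ⟨hev, hsucc⟩
      have hev' : M.E t A (Quotient.mk _ w).out :=
        minEvidence_subset (hE.comap Quotient.out) (fun _ hx => hx.2) hev
      refine (sat_out_mk_iff hA w).1 ⟨hev', fun v hv => (ih hA' v).1 (hsucc _ ?_)⟩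
      simpa only [Quotient.out_eq] using filtration_R_mk (CS := CS) (Φ := Φ) hv
    · intro h
      refine ⟨subset_minEvidence _ ⟨hA, ((sat_out_mk_iff hA w).2 h).1⟩, ?_⟩
      rintro _ ⟨w', v, hw', rfl, hR⟩
      exact (ih hA' v).2 ((Quotient.exact hw' _ hA).2 h |>.2 v hR)

end Filtration

theorem strong_finitary_model_property_JD_general (CS : Set Formula)
    (hApp : AxApprop AxJD CS) :
    ∃ f g h : ℕ → ℕ, Computable f ∧ Computable g ∧ Computable h ∧
      ∀ A : Formula, ¬ DerivB AxJD CS A →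
        ∃ M : Model, IsModelJD CS M ∧
          Finite M.World ∧ (ValSet M).Finite ∧
          (∃ B : Set (Term × Formula × M.World),
            B.Finite ∧ MinBaseBang CS M B ∧ B.ncard ≤ g A.size) ∧
          (∃ w : M.World, ¬ Sat M A w) ∧
          Nat.card M.World ≤ f A.size ∧
          (ValSet M).ncard ≤ h A.size := by
  have hpow : Primrec fun n : ℕ => 2 ^ n :=
    (Primrec₂.unpaired'.1 Nat.Primrec.pow).comp (Primrec.const 2) Primrec.id
  have hmul : Primrec fun n : ℕ => n * 2 ^ n := Primrec.nat_mul.comp Primrec.id hpow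
  refine ⟨fun n => 2 ^ n, fun n => n * 2 ^ n, fun n => n * 2 ^ n,
    hpow.to_comp, hmul.to_comp, hmul.to_comp, fun A hA => ?_⟩
  obtain ⟨Γ, hΓ, hAΓ⟩ := exists_maxConsistent_not_mem hA
  let M₀ := canonicalModel CS ⟨⟨Γ, hΓ⟩⟩
  let Φ := A.subformulas
  have hM₀ : IsModelJD CS M₀ := isModelJD_canonicalModel _ hApp
  have hcard : Nat.card (filtration CS M₀ Φ).World ≤ 2 ^ A.size :=
    (card_world_filtration_le CS M₀ Φ).trans
      (Nat.pow_le_pow_right two_pos A.card_subformulas_le_size)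
  have hbound : Φ.card * Nat.card (filtration CS M₀ Φ).World ≤ A.size * 2 ^ A.size :=
    Nat.mul_le_mul A.card_subformulas_le_size hcard
  have hfalse : ¬ Sat (filtration CS M₀ Φ) A (Quotient.mk _ (⟨Γ, hΓ⟩ : M₀.World)) :=
    fun hsat => hAΓ <| (sat_canonicalModel_iff _ A _).1 <|
      (sat_filtration_mk_iff (isSubformulaClosed_subformulas A) hM₀.2 A.mem_subformulas_self _).1
        hsat
  obtain ⟨hBfin, hBcard⟩ := filtrationBase_finite_and_ncard_le CS M₀ Φ
  obtain ⟨hVfin, hVcard⟩ := valSet_filtration_finite_and_ncard_le CS M₀ Φ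
  exact ⟨filtration CS M₀ Φ, isModelJD_filtration hM₀, inferInstance, hVfin,
    ⟨_, hBfin, minBaseBang_filtration, hBcard.trans hbound⟩, ⟨_, hfalse⟩, hcard,
    hVcard.trans hbound⟩

/-- Strong finitary model property of `JD_CS`: for an axiomatically appropriate constant
specification `CS` there are computable functions `f, g, h` such that every formula `A`
not derivable in `JD_CS` fails at some world of a finitary Fitting model for `JD_CS`
whose set of worlds, finite evidence base, and valuation graph are bounded in size by
`f |A|`, `g |A|`, and `h |A|` respectively. -/
theorem strong_finitary_model_property_JD (CS : Set Formula)
    (hCS : ConstSpec AxJD CS) (hApp : AxApprop AxJD CS) :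
    ∃ f g h : ℕ → ℕ, Computable f ∧ Computable g ∧ Computable h ∧
      ∀ A : Formula, ¬ DerivB AxJD CS A →
        ∃ M : Model, IsModelJD CS M ∧
          Finite M.World ∧ (ValSet M).Finite ∧
          (∃ B : Set (Term × Formula × M.World),
            B.Finite ∧ MinBaseBang CS M B ∧ B.ncard ≤ g A.size) ∧
          (∃ w : M.World, ¬ Sat M A w) ∧
          Nat.card M.World ≤ f A.size ∧
          (ValSet M).ncard ≤ h A.size :=
  strong_finitary_model_property_JD_general CS hApp

end JustificationLogic
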